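/- Let X be a resolving subcategory of K^{[-1,0]}(proj Λ). Then β(X) = { X ∈ X : for every conflation X ↣ X' ↠ X'' with X' ∈ X, X'' ∈ X } is closed under extensions: if X ↣ Y ↠ Z is a conflation with X, Z ∈ β(X), then Y ∈ β(X). -/

import Mathlib

/-! **Statement 9.**  `K^{[-1,0]}(proj Λ)` is realized concretely as the full subcategory of
the homotopy category of cochain complexes of `Λ`-modules consisting of objects isomorphic to
complexes of finitely generated projective modules concentrated in degrees `-1, 0`; its
conflations are the distinguished triangles all of whose terms lie in this subcategory. -/

open CategoryTheory Limits Pretriangulated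

namespace Stmt9

universe u
variable (Λ : Type u) [Ring Λ]

/-- The homotopy category of cochain complexes of `Λ`-modules. -/
abbrev HtpyCat := HomotopyCategory (ModuleCat.{u} Λ) (ComplexShape.up ℤ)

/-- The subcategory `K^{[-1,0]}(proj Λ)`. -/
def KLam : Set (HtpyCat Λ) :=
  {X | ∃ C : CochainComplex (ModuleCat.{u} Λ) ℤ,
    (∀ i : ℤ, i ≠ -1 → i ≠ 0 → IsZero (C.X i)) ∧
    Module.Projective Λ (C.X (-1)) ∧ Module.Projective Λ (C.X 0) ∧
    Module.Finite Λ (C.X (-1)) ∧ Module.Finite Λ (C.X 0) ∧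
    Nonempty (X ≅ (HomotopyCategory.quotient _ _).obj C)}

/-- Conflations of `K^{[-1,0]}(proj Λ)`. -/
def IsConflation {X Y Z : HtpyCat Λ} (f : X ⟶ Y) (g : Y ⟶ Z) : Prop :=
  X ∈ KLam Λ ∧ Y ∈ KLam Λ ∧ Z ∈ KLam Λ ∧
    ∃ h : Z ⟶ X⟦(1 : ℤ)⟧, Triangle.mk f g h ∈ distTriang (HtpyCat Λ)

/-- `Z` is a direct sum of `A` and `B`. -/
def IsBiprodDecomp (Z A B : HtpyCat Λ) : Prop :=
  ∃ (iA : A ⟶ Z) (iB : B ⟶ Z) (pA : Z ⟶ A) (pB : Z ⟶ B),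
    iA ≫ pA = 𝟙 A ∧ iB ≫ pB = 𝟙 B ∧ iA ≫ pB = 0 ∧ iB ≫ pA = 0 ∧
      pA ≫ iA + pB ≫ iB = 𝟙 Z

/-- `X` is a resolving subcategory of `K^{[-1,0]}(proj Λ)`: it is closed under extensions,
cocones and direct summands, and every object of `K` is the cone of a conflation with middle
term in `X` (equivalently, `X` contains all projective objects). -/
def Resolving (X : Set (HtpyCat Λ)) : Prop :=
  X ⊆ KLam Λ ∧
  (∀ Z ∈ KLam Λ, ∃ (A B : HtpyCat Λ) (f : A ⟶ B) (g : B ⟶ Z),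
    A ∈ KLam Λ ∧ B ∈ X ∧ IsConflation Λ f g) ∧
  (∀ ⦃A B C : HtpyCat Λ⦄ (f : A ⟶ B) (g : B ⟶ C),
    IsConflation Λ f g → A ∈ X → C ∈ X → B ∈ X) ∧
  (∀ ⦃A B C : HtpyCat Λ⦄ (f : A ⟶ B) (g : B ⟶ C),
    IsConflation Λ f g → B ∈ X → C ∈ X → A ∈ X) ∧
  (∀ Z A B : HtpyCat Λ, IsBiprodDecomp Λ Z A B → Z ∈ X → A ∈ X)

/-- `β(X) = { X ∈ X : every conflation X ↣ X' ↠ X'' with X' ∈ X has X'' ∈ X }`. -/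
def beta (X : Set (HtpyCat Λ)) : Set (HtpyCat Λ) :=
  {A | A ∈ X ∧ ∀ ⦃B C : HtpyCat Λ⦄ (f : A ⟶ B) (g : B ⟶ C),
    IsConflation Λ f g → B ∈ X → C ∈ X}

/-! `B ∈ X` since `X` is extension-closed. Given a conflation `B ↣ B' ↠ B''` with `B' ∈ X`,
the octahedral axiom for `A ⟶ B ⟶ B'` exhibits the cone `D` of `A ⟶ B'` as an extension
`C ↣ D ↠ B''`. Since `K^{[-1,0]}(proj Λ)` is extension-closed, `A ↣ B' ↠ D` is a conflation,
so `D ∈ X` as `A ∈ β(X)`; then `C ↣ D ↠ B''` is a conflation, so `B'' ∈ X` as `C ∈ β(X)`. -/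

section Cone

variable {C : Type*} [Category C] [Preadditive C] [HasBinaryBiproducts C]

noncomputable def mappingConeShiftXIso {K L : CochainComplex C ℤ} (ψ : K⟦(-1 : ℤ)⟧ ⟶ L)
    (i : ℤ) : (CochainComplex.mappingCone ψ).X i ≅ K.X i ⊞ L.X i :=
  HomologicalComplex.homotopyCofiber.XIsoBiprod ψ i (i + 1) rfl ≪≫
    biprod.mapIso (K.shiftFunctorObjXIso (-1) (i + 1) i (by omega)) (Iso.refl _)

end Cone

section ProjTwoTerm

variable {Λ}

lemma projective_of_iso_biprod {M N P : ModuleCat.{u} Λ} (e : P ≅ M ⊞ N)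
    [Module.Projective Λ M] [Module.Projective Λ N] : Module.Projective Λ P :=
  Module.Projective.of_equiv (e ≪≫ ModuleCat.biprodIsoProd M N).toLinearEquiv.symm

lemma finite_of_iso_biprod {M N P : ModuleCat.{u} Λ} (e : P ≅ M ⊞ N)
    [Module.Finite Λ M] [Module.Finite Λ N] : Module.Finite Λ P :=
  Module.Finite.equiv (e ≪≫ ModuleCat.biprodIsoProd M N).toLinearEquiv.symm

structure IsProjTwoTerm (K : CochainComplex (ModuleCat.{u} Λ) ℤ) : Prop where
  isZero_X : ∀ i : ℤ, i ≠ -1 → i ≠ 0 → IsZero (K.X i)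
  projective_X_neg_one : Module.Projective Λ (K.X (-1))
  projective_X_zero : Module.Projective Λ (K.X 0)
  finite_X_neg_one : Module.Finite Λ (K.X (-1))
  finite_X_zero : Module.Finite Λ (K.X 0)

lemma mem_KLam_iff {X : HtpyCat Λ} : X ∈ KLam Λ ↔
    ∃ K, IsProjTwoTerm K ∧ Nonempty (X ≅ (HomotopyCategory.quotient _ _).obj K) :=
  ⟨fun ⟨K, h₁, h₂, h₃, h₄, h₅, e⟩ => ⟨K, ⟨h₁, h₂, h₃, h₄, h₅⟩, e⟩,
    fun ⟨K, ⟨h₁, h₂, h₃, h₄, h₅⟩, e⟩ => ⟨K, h₁, h₂, h₃, h₄, h₅, e⟩⟩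

lemma IsProjTwoTerm.mappingCone {K L : CochainComplex (ModuleCat.{u} Λ) ℤ}
    (hK : IsProjTwoTerm K) (hL : IsProjTwoTerm L) (ψ : K⟦(-1 : ℤ)⟧ ⟶ L) :
    IsProjTwoTerm (CochainComplex.mappingCone ψ) where
  isZero_X i h₁ h₀ :=
    ((biprod_isZero_iff _ _).2 ⟨hK.isZero_X i h₁ h₀, hL.isZero_X i h₁ h₀⟩).of_iso
      (mappingConeShiftXIso ψ i)
  projective_X_neg_one :=
    have := hK.projective_X_neg_one
    have := hL.projective_X_neg_one
    projective_of_iso_biprod (mappingConeShiftXIso ψ (-1))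
  projective_X_zero :=
    have := hK.projective_X_zero
    have := hL.projective_X_zero
    projective_of_iso_biprod (mappingConeShiftXIso ψ 0)
  finite_X_neg_one :=
    have := hK.finite_X_neg_one
    have := hL.finite_X_neg_one
    finite_of_iso_biprod (mappingConeShiftXIso ψ (-1))
  finite_X_zero :=
    have := hK.finite_X_zero
    have := hL.finite_X_zero
    finite_of_iso_biprod (mappingConeShiftXIso ψ 0)

lemma mem_KLam_of_distTriang {T : Triangle (HtpyCat Λ)} (hT : T ∈ distTriang (HtpyCat Λ))
    (h₁ : T.obj₁ ∈ KLam Λ) (h₃ : T.obj₃ ∈ KLam Λ) : T.obj₂ ∈ KLam Λ := by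
  obtain ⟨K, hK, ⟨e₃⟩⟩ := mem_KLam_iff.1 h₃
  obtain ⟨L, hL, ⟨e₁⟩⟩ := mem_KLam_iff.1 h₁
  let Q := HomotopyCategory.quotient (ModuleCat.{u} Λ) (ComplexShape.up ℤ)
  let a : Q.obj (K⟦(-1 : ℤ)⟧) ≅ T.obj₃⟦(-1 : ℤ)⟧ :=
    (Q.commShiftIso (-1 : ℤ)).app K ≪≫ (shiftFunctor _ (-1 : ℤ)).mapIso e₃.symm
  -- lifting the first map of the rotated triangle to complexes exhibits `T.obj₂` as its cone
  obtain ⟨ψ, hψ⟩ := Q.map_surjective ((a.hom ≫ T.invRotate.mor₁) ≫ e₁.hom)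
  let e := isoTriangleOfIso₁₂ _ _ (HomotopyCategory.mappingCone_triangleh_distinguished ψ)
    (inv_rot_of_distTriang _ hT) a e₁.symm ((Iso.comp_inv_eq e₁).2 hψ)
  exact mem_KLam_iff.2 ⟨_, hK.mappingCone hL ψ, ⟨(Triangle.π₃.mapIso e).symm⟩⟩

end ProjTwoTerm

/-- If `X` is a resolving subcategory of `K^{[-1,0]}(proj Λ)`, then
`β(X)` is closed under extensions: if `A ↣ B ↠ C` is a conflation with `A, C ∈ β(X)`,
then `B ∈ β(X)`. -/
theorem stmt9 (X : Set (HtpyCat Λ)) (hX : Resolving Λ X) :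
    ∀ ⦃A B C : HtpyCat Λ⦄ (f : A ⟶ B) (g : B ⟶ C), IsConflation Λ f g →
      A ∈ beta Λ X → C ∈ beta Λ X → B ∈ beta Λ X := by
  obtain ⟨-, -, hXext, -, -⟩ := hX
  rintro A B C f g ⟨hAK, hBK, hCK, h, hT⟩ ⟨hA, hAβ⟩ ⟨hC, hCβ⟩
  refine ⟨hXext f g ⟨hAK, hBK, hCK, h, hT⟩ hA hC,
    fun B' B'' u v ⟨_, hB'K, hB''K, w, hT'⟩ hB' => ?_⟩
  obtain ⟨D, v', w', hT''⟩ := distinguished_cocone_triangle (f ≫ u)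
  let oct := Triangulated.someOctahedron rfl hT hT' hT''
  have hDK : D ∈ KLam Λ := mem_KLam_of_distTriang oct.mem hCK hB''K
  have hD : D ∈ X := hAβ (f ≫ u) v' ⟨hAK, hB'K, hDK, w', hT''⟩ hB'
  exact hCβ oct.m₁ oct.m₃ ⟨hCK, hDK, hB''K, _, oct.mem⟩ hD

end Stmt9
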